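/- Let f : ℝⁿ → ℝ and c : ℝⁿ → ℝᵐ be continuously differentiable, let J(x̄) be the Jacobian of c at x̄, and let σ > 0, τ > 0. If s = 0 is a global minimizer of the function s ↦ ∇f(x̄)ᵀ s + τ‖c(x̄) + J(x̄) s‖₂ + (σ/2)‖s‖₂², then there exists ȳ ∈ ℝᵐ with ‖ȳ‖₂ ≤ τ such that ∇f(x̄) + J(x̄)ᵀ ȳ = 0, and moreover ȳ = τ c(x̄)/‖c(x̄)‖₂ whenever c(x̄) ≠ 0. In particular, if in addition c(x̄) = 0, then x̄ is a KKT point of the problem of minimizing f(x) subject to c(x) = 0, i.e., there exists y ∈ ℝᵐ with ∇f(x̄) = J(x̄)ᵀ y and c(x̄) = 0. -/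

import Mathlib

open scoped RealInnerProductSpace
open ContinuousLinearMap

/-!
The model `m(s) = ⟪g, s⟫ + τ‖c + J s‖ + (σ/2)‖s‖²` is minimized at `0`. If `c ≠ 0` it is
differentiable at `0`, and Fermat's rule gives `g + Jᵀ (τ c / ‖c‖) = 0`. If `c = 0`, comparing
`m(t v)` with `m(0)` as `t ↓ 0` gives `⟪g, v⟫ + τ‖J v‖ ≥ 0` for every `v`. Then `g` vanishes on
`ker J`, so `-g = Jᵀ J u` for some `u` because `range (Jᵀ J) = (ker J)ᗮ`, and `y = J u` satisfies
`‖y‖² = -⟪g, u⟫ ≤ τ‖y‖`.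
-/

theorem nonneg_of_forall_pos_nonneg_add_mul {a C : ℝ} (h : ∀ t > 0, 0 ≤ a + t * C) : 0 ≤ a := by
  have hlim : Filter.Tendsto (fun t : ℝ => a + t * C) (nhdsWithin 0 (Set.Ioi 0)) (nhds a) := by
    have : Continuous (fun t : ℝ => a + t * C) := by fun_prop
    simpa using (this.tendsto 0).mono_left nhdsWithin_le_nhds
  exact ge_of_tendsto hlim (eventually_nhdsWithin_of_forall h)

theorem HasFDerivAt.norm {E F : Type*} [NormedAddCommGroup E] [NormedSpace ℝ E]
    [NormedAddCommGroup F] [InnerProductSpace ℝ F] {f : E → F} {f' : E →L[ℝ] F} {x : E}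
    (hf : HasFDerivAt f f' x) (h0 : f x ≠ 0) :
    HasFDerivAt (‖f ·‖) (‖f x‖⁻¹ • (innerSL ℝ (f x)).comp f') x := by
  have := hf.norm_sq.sqrt (by positivity)
  simp only [Real.sqrt_sq (norm_nonneg _)] at this
  convert this using 1
  ext v
  simp only [smul_apply, comp_apply, innerSL_apply_apply, smul_eq_mul, nsmul_eq_mul,
    Nat.cast_ofNat]
  field_simp

section PenaltyModel

variable {E F : Type*} [NormedAddCommGroup E] [InnerProductSpace ℝ E]
  [NormedAddCommGroup F] [InnerProductSpace ℝ F]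

noncomputable def penaltyModel (g : E) (c : F) (J : E →L[ℝ] F) (τ σ : ℝ) (s : E) : ℝ :=
  ⟪g, s⟫ + τ * ‖c + J s‖ + σ / 2 * ‖s‖ ^ 2

theorem inner_add_mul_norm_nonneg_of_isMinOn_penaltyModel {g : E} {J : E →L[ℝ] F} {τ σ : ℝ}
    (hmin : IsMinOn (penaltyModel g 0 J τ σ) Set.univ 0) (v : E) :
    0 ≤ ⟪g, v⟫ + τ * ‖J v‖ := by
  refine nonneg_of_forall_pos_nonneg_add_mul (C := σ / 2 * ‖v‖ ^ 2) fun t ht => ?_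
  have hscaled : penaltyModel g 0 J τ σ (t • v)
      = t * (⟪g, v⟫ + τ * ‖J v‖ + t * (σ / 2 * ‖v‖ ^ 2)) := by
    simp only [penaltyModel, map_smul, zero_add, real_inner_smul_right, norm_smul,
      Real.norm_of_nonneg ht.le]
    ring
  have h0 : penaltyModel g 0 J τ σ 0 = 0 := by simp [penaltyModel]
  have : penaltyModel g 0 J τ σ 0 ≤ penaltyModel g 0 J τ σ (t • v) := hmin (Set.mem_univ _)
  rw [h0, hscaled] at this
  exact nonneg_of_mul_nonneg_right this ht

variable [CompleteSpace E] [CompleteSpace F]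

theorem hasFDerivAt_penaltyModel {g : E} {c : F} {J : E →L[ℝ] F} {τ σ : ℝ} (hc : c ≠ 0) :
    HasFDerivAt (penaltyModel g c J τ σ) (innerSL ℝ (g + adjoint J ((τ / ‖c‖) • c))) 0 := by
  have hlin : HasFDerivAt (fun s : E => ⟪g, s⟫) (innerSL ℝ g) 0 := (innerSL ℝ g).hasFDerivAt
  have hpen : HasFDerivAt (fun s => ‖c + J s‖) ((‖c‖⁻¹ • innerSL ℝ c).comp J) 0 := by
    simpa using ((J.hasFDerivAt (x := 0)).const_add c).norm (by simpa using hc)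
  have hsq : HasFDerivAt (fun s : E => ‖s‖ ^ 2) (0 : E →L[ℝ] ℝ) 0 := by
    simpa using (hasStrictFDerivAt_norm_sq (0 : E)).hasFDerivAt
  refine ((hlin.add (hpen.const_mul τ)).add (hsq.const_mul (σ / 2))).congr_fderiv ?_
  ext v
  simp only [smul_comp, smul_zero, add_zero, add_apply, coe_innerSL_apply, smul_apply,
    comp_apply, smul_eq_mul, map_smul, map_add, adjoint_inner_left, add_right_inj]
  ring

theorem add_adjoint_eq_zero_of_isMinOn_penaltyModel {g : E} {c : F} {J : E →L[ℝ] F} {τ σ : ℝ}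
    (hc : c ≠ 0) (hmin : IsMinOn (penaltyModel g c J τ σ) Set.univ 0) :
    g + adjoint J ((τ / ‖c‖) • c) = 0 := by
  set w := g + adjoint J ((τ / ‖c‖) • c)
  have hw := DFunLike.congr_fun
    ((hmin.isLocalMin Filter.univ_mem).hasFDerivAt_eq_zero (hasFDerivAt_penaltyModel hc)) w
  rwa [innerSL_apply_apply, zero_apply, inner_self_eq_zero] at hw

theorem exists_adjoint_apply_apply_eq_of_mem_orthogonal_ker [FiniteDimensional ℝ E]
    [FiniteDimensional ℝ F] {J : E →L[ℝ] F} {w : E} (hw : w ∈ (LinearMap.ker (J : E →ₗ[ℝ] F))ᗮ) :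
    ∃ u, adjoint J (J u) = w := by
  rw [LinearMap.orthogonal_ker, ← LinearMap.range_adjoint_comp_self] at hw
  exact hw

theorem exists_norm_le_add_adjoint_eq_zero [FiniteDimensional ℝ E] [FiniteDimensional ℝ F]
    {g : E} {J : E →L[ℝ] F} {τ : ℝ} (hτ : 0 ≤ τ) (h : ∀ v, 0 ≤ ⟪g, v⟫ + τ * ‖J v‖) :
    ∃ y, ‖y‖ ≤ τ ∧ g + adjoint J y = 0 := by
  have hg : -g ∈ (LinearMap.ker (J : E →ₗ[ℝ] F))ᗮ := by
    refine (Submodule.mem_orthogonal' _ _).2 fun v hv => ?_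
    have h₁ := h v
    have h₂ := h (-v)
    simp only [LinearMap.mem_ker, coe_coe] at hv
    simp only [hv, map_neg, inner_neg_left, inner_neg_right, norm_neg, norm_zero, mul_zero,
      add_zero] at h₁ h₂ ⊢
    linarith
  obtain ⟨u, hu⟩ := exists_adjoint_apply_apply_eq_of_mem_orthogonal_ker hg
  refine ⟨J u, ?_, by rw [hu, add_neg_cancel]⟩
  have hsq : ‖J u‖ ^ 2 ≤ τ * ‖J u‖ := calc
    ‖J u‖ ^ 2 = ⟪u, adjoint J (J u)⟫ := by rw [adjoint_inner_right, real_inner_self_eq_norm_sq]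
    _ = -⟪g, u⟫ := by rw [hu, inner_neg_right, real_inner_comm]
    _ ≤ τ * ‖J u‖ := by linarith [h u]
  nlinarith [norm_nonneg (J u)]

end PenaltyModel

theorem stmt_2 {n m : ℕ}
    (f : EuclideanSpace ℝ (Fin n) → ℝ)
    (c : EuclideanSpace ℝ (Fin n) → EuclideanSpace ℝ (Fin m))
    (xb : EuclideanSpace ℝ (Fin n)) (σ τ : ℝ) (hτ : 0 < τ)
    (hmin : ∀ s : EuclideanSpace ℝ (Fin n),
      (inner ℝ (gradient f xb) (0 : EuclideanSpace ℝ (Fin n)) : ℝ)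
          + τ * ‖c xb + fderiv ℝ c xb 0‖ + σ / 2 * ‖(0 : EuclideanSpace ℝ (Fin n))‖ ^ 2
        ≤ (inner ℝ (gradient f xb) s : ℝ) + τ * ‖c xb + fderiv ℝ c xb s‖ + σ / 2 * ‖s‖ ^ 2) :
    ∃ yb : EuclideanSpace ℝ (Fin m),
      ‖yb‖ ≤ τ ∧
      gradient f xb + ContinuousLinearMap.adjoint (fderiv ℝ c xb) yb = 0 ∧
      (c xb ≠ 0 → yb = (τ / ‖c xb‖) • c xb) ∧
      (c xb = 0 → ∃ y : EuclideanSpace ℝ (Fin m),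
        gradient f xb = ContinuousLinearMap.adjoint (fderiv ℝ c xb) y ∧ c xb = 0) := by
  have hmodel : IsMinOn (penaltyModel (gradient f xb) (c xb) (fderiv ℝ c xb) τ σ) Set.univ 0 :=
    fun s _ => hmin s
  obtain ⟨y, hy, hgy, hyc⟩ : ∃ y, ‖y‖ ≤ τ ∧ gradient f xb + adjoint (fderiv ℝ c xb) y = 0 ∧
      (c xb ≠ 0 → y = (τ / ‖c xb‖) • c xb) := by
    by_cases hc : c xb = 0
    · rw [hc] at hmodel
      obtain ⟨y, hy, hgy⟩ := exists_norm_le_add_adjoint_eq_zero hτ.le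
        (inner_add_mul_norm_nonneg_of_isMinOn_penaltyModel hmodel)
      exact ⟨y, hy, hgy, fun h => absurd hc h⟩
    · refine ⟨_, ?_, add_adjoint_eq_zero_of_isMinOn_penaltyModel hc hmodel, fun _ => rfl⟩
      rw [norm_smul, Real.norm_of_nonneg (by positivity), div_mul_cancel₀ _ (norm_ne_zero_iff.2 hc)]
  refine ⟨y, hy, hgy, hyc, fun hc => ⟨-y, ?_, hc⟩⟩
  rw [map_neg, ← eq_neg_of_add_eq_zero_left hgy]
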